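/- Assume all parameters are positive and c₁(δ₀) = (b+γ) + (s_M/μ_M)(N₃ β + η) − δ₀ > 0. Then there exist ε > 0 and a differentiable function λ₁ : (δ₀ − ε, δ₀ + ε) → ℝ such that for every δ in this interval, λ₁(δ)² + c₁(δ) λ₁(δ) + c₂(δ) = 0, with λ₁(δ₀) = 0 and derivative λ₁′(δ₀) = (b+γ)/c₁(δ₀) > 0. Hence near the threshold δ₀ the dominant eigenvalue satisfies λ₁(δ) = (b+γ)(δ − δ₀)/c₁(δ₀) + o(δ − δ₀), so the infection grows for δ slightly above δ₀ and decays for δ slightly below δ₀. -/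

import Mathlib

open Set

/-!
The dominant eigenvalue is the larger root `(-c₁ + √(c₁² - 4 c₂)) / 2` of the quadratic factor.
At `δ₀` the constant term `c₂` vanishes while `c₁ > 0`, so the discriminant is positive there and
hence near `δ₀`; the square-root formula is then a differentiable branch of roots through `0`.
Implicit differentiation of `λ² + c₁ λ + c₂ = 0` at `λ = 0` gives `λ' = -c₂' / c₁ = (b + γ) / c₁(δ₀)`.
-/

/-- The larger real root of `X² + p X + q`; junk (`√` of a negative number is `0`) when the
discriminant is negative. -/
noncomputable def largerRoot (p q : ℝ) : ℝ := (-p + √(discrim 1 p q)) / 2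

lemma two_mul_largerRoot_add {p q : ℝ} : 2 * largerRoot p q + p = √(discrim 1 p q) := by
  unfold largerRoot
  ring

lemma largerRoot_sq_add_mul_add {p q : ℝ} (h : 0 ≤ discrim 1 p q) :
    largerRoot p q ^ 2 + p * largerRoot p q + q = 0 := by
  have hsq : √(discrim 1 p q) ^ 2 = p ^ 2 - 4 * q := by
    rw [Real.sq_sqrt h, discrim]
    ring
  unfold largerRoot
  linear_combination hsq / 4

lemma largerRoot_zero_right {p : ℝ} (hp : 0 ≤ p) : largerRoot p 0 = 0 := by
  simp [largerRoot, discrim, Real.sqrt_sq hp]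

/-- Implicit differentiation of `r² + p r + q = 0`: `r' = -(p' r + q') / (2 r + p)`. -/
theorem hasDerivAt_largerRoot {p q : ℝ → ℝ} {p' q' x : ℝ} (hp : HasDerivAt p p' x)
    (hq : HasDerivAt q q' x) (hD : 0 < discrim 1 (p x) (q x)) :
    HasDerivAt (fun t ↦ largerRoot (p t) (q t))
      (-(p' * largerRoot (p x) (q x) + q') / √(discrim 1 (p x) (q x))) x := by
  have hdiscrim : HasDerivAt (fun t ↦ discrim 1 (p t) (q t)) (2 * p x * p' - 4 * q') x := by
    simp only [discrim, mul_one]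
    exact ((hp.fun_pow 2).fun_sub (hq.const_mul 4)).congr_deriv (by norm_num)
  have hroot : HasDerivAt (fun t ↦ largerRoot (p t) (q t))
      ((-p' + (2 * p x * p' - 4 * q') / (2 * √(discrim 1 (p x) (q x)))) / 2) x :=
    (hp.fun_neg.fun_add (hdiscrim.sqrt hD.ne')).div_const 2
  refine hroot.congr_deriv ?_
  have hsqrt : √(discrim 1 (p x) (q x)) ≠ 0 := (Real.sqrt_pos.mpr hD).ne'
  field_simp
  linear_combination (2 * p') * (two_mul_largerRoot_add (p := p x) (q := q x))

theorem dominant_eigenvalue_branch_at_threshold_general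
    (sM μM β b γ N₃ η : ℝ)
    (hb : 0 < b) (hγ : 0 < γ)
    (c₁ c₂ : ℝ → ℝ) (δ₀ : ℝ)
    (hc₁ : ∀ δ : ℝ, c₁ δ = (b + γ) + (sM / μM) * (N₃ * β + η) - δ)
    (hc₂ : ∀ δ : ℝ, c₂ δ = (b + γ) * (δ₀ - δ))
    (hc₁pos : 0 < c₁ δ₀) :
    ∃ ε > 0, ∃ lam₁ : ℝ → ℝ,
      (∀ δ ∈ Ioo (δ₀ - ε) (δ₀ + ε),
        DifferentiableAt ℝ lam₁ δ ∧
        (lam₁ δ) ^ 2 + c₁ δ * lam₁ δ + c₂ δ = 0) ∧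
      lam₁ δ₀ = 0 ∧
      HasDerivAt lam₁ ((b + γ) / c₁ δ₀) δ₀ ∧
      0 < (b + γ) / c₁ δ₀ := by
  have hc₁' : ∀ δ, HasDerivAt c₁ (-1) δ := fun δ ↦ by
    rw [show c₁ = fun δ ↦ (b + γ) + (sM / μM) * (N₃ * β + η) - δ from funext hc₁]
    simpa using (hasDerivAt_id δ).const_sub _
  have hc₂' : ∀ δ, HasDerivAt c₂ (-(b + γ)) δ := fun δ ↦ by
    rw [show c₂ = fun δ ↦ (b + γ) * (δ₀ - δ) from funext hc₂]
    simpa using ((hasDerivAt_id δ).const_sub δ₀).const_mul (b + γ)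
  have hc₂δ₀ : c₂ δ₀ = 0 := by simp [hc₂]
  have hdiscrim_cont : Continuous fun δ ↦ discrim 1 (c₁ δ) (c₂ δ) :=
    continuous_iff_continuousAt.mpr fun δ ↦
      ((hc₁' δ).continuousAt.pow 2).sub (continuousAt_const.mul (hc₂' δ).continuousAt)
  have hdiscrim₀ : 0 < discrim 1 (c₁ δ₀) (c₂ δ₀) := by
    simpa [discrim, hc₂δ₀] using pow_pos hc₁pos 2
  obtain ⟨ε, hε, hball⟩ := Metric.isOpen_iff.mp (isOpen_lt continuous_const hdiscrim_cont) δ₀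
    hdiscrim₀
  refine ⟨ε, hε, fun δ ↦ largerRoot (c₁ δ) (c₂ δ), fun δ hδ ↦ ?_, ?_, ?_, by positivity⟩
  · have hdiscrim : 0 < discrim 1 (c₁ δ) (c₂ δ) := hball (by rwa [Real.ball_eq_Ioo])
    exact ⟨(hasDerivAt_largerRoot (hc₁' δ) (hc₂' δ) hdiscrim).differentiableAt,
      largerRoot_sq_add_mul_add hdiscrim.le⟩
  · simp only [hc₂δ₀, largerRoot_zero_right hc₁pos.le]
  · convert hasDerivAt_largerRoot (hc₁' δ₀) (hc₂' δ₀) hdiscrim₀ using 1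
    rw [← two_mul_largerRoot_add, hc₂δ₀, largerRoot_zero_right hc₁pos.le]
    ring

/-- If c₁(δ₀) > 0, there exist ε > 0 and a differentiable branch
λ₁ : (δ₀−ε, δ₀+ε) → ℝ of roots of λ² + c₁(δ)λ + c₂(δ) = 0 with λ₁(δ₀) = 0 and
λ₁′(δ₀) = (b+γ)/c₁(δ₀) > 0. -/
theorem dominant_eigenvalue_branch_at_threshold
    (sM μM β b γ N₁ N₂ N₃ η : ℝ)
    (hsM : 0 < sM) (hμM : 0 < μM) (hβ : 0 < β) (hb : 0 < b) (hγ : 0 < γ)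
    (hN₁ : 0 < N₁) (hN₂ : 0 < N₂) (hN₃ : 0 < N₃) (hη : 0 < η)
    (c₁ c₂ : ℝ → ℝ) (δ₀ : ℝ)
    (hc₁ : ∀ δ : ℝ, c₁ δ = (b + γ) + (sM / μM) * (N₃ * β + η) - δ)
    (hδ₀ : δ₀ = (sM / μM) * (η - β * ((N₂ - N₃) * γ + (N₁ - N₃) * b) / (b + γ)))
    (hc₂ : ∀ δ : ℝ, c₂ δ = (b + γ) * (δ₀ - δ))
    (hc₁pos : 0 < c₁ δ₀) :
    ∃ ε > 0, ∃ lam₁ : ℝ → ℝ,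
      (∀ δ ∈ Ioo (δ₀ - ε) (δ₀ + ε),
        DifferentiableAt ℝ lam₁ δ ∧
        (lam₁ δ) ^ 2 + c₁ δ * lam₁ δ + c₂ δ = 0) ∧
      lam₁ δ₀ = 0 ∧
      HasDerivAt lam₁ ((b + γ) / c₁ δ₀) δ₀ ∧
      0 < (b + γ) / c₁ δ₀ :=
  dominant_eigenvalue_branch_at_threshold_general sM μM β b γ N₃ η hb hγ c₁ c₂ δ₀ hc₁ hc₂ hc₁pos
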